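/- The SI-T-2 scheme is second-order consistent on the linear test problem: e^{z+w} − R_{SI-T-2}(z,w) = O((|z|+|w|)³) as (z,w) → (0,0), where R_{SI-T-2}(z,w) = (1 + z + (z²+zw)/2)/(1 − w + (zw+w²)/2). -/

import Mathlib

/-!
With `u = z + w`, clearing the denominator `D` of `R_{SI-T-2}` against the quadratic Taylor
polynomial `T(u) = 1 + u + u²/2` of the exponential leaves the exact cubic defect
`T(u) D - N = w u³ / 4`, so `e^u - N / D = ((e^u - T(u)) D + w u³ / 4) / D`. For
`‖z‖ + ‖w‖ ≤ 1/2` the denominator stays within `5/8` of `1`, and both terms of the numerator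
are cubic in `‖z‖ + ‖w‖`.
-/

open Complex

namespace SIT2

noncomputable def num (z w : ℂ) : ℂ := 1 + z + (z ^ 2 + z * w) / 2

noncomputable def den (z w : ℂ) : ℂ := 1 - w + (z * w + w ^ 2) / 2

theorem taylor_mul_den_sub_num (z w : ℂ) :
    (1 + (z + w) + (z + w) ^ 2 / 2) * den z w - num z w = w * (z + w) ^ 3 / 4 := by
  unfold num den
  ring

theorem exp_sub_num_div_den {z w : ℂ} (hD : den z w ≠ 0) :
    exp (z + w) - num z w / den z w =
      ((exp (z + w) - (1 + (z + w) + (z + w) ^ 2 / 2)) * den z w + w * (z + w) ^ 3 / 4)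
        / den z w := by
  rw [← taylor_mul_den_sub_num, eq_div_iff hD]
  field_simp
  ring

theorem norm_exp_sub_taylor_two_le {x : ℂ} (hx : ‖x‖ ≤ 1) :
    ‖exp x - (1 + x + x ^ 2 / 2)‖ ≤ 2 / 9 * ‖x‖ ^ 3 := by
  have h := exp_bound hx (n := 3) (by norm_num)
  norm_num [Finset.sum_range_succ, Nat.factorial] at h
  linarith

theorem norm_den_sub_one_le {z w : ℂ} (h : ‖z‖ + ‖w‖ ≤ 1 / 2) : ‖den z w - 1‖ ≤ 5 / 8 := by
  have hsplit : den z w - 1 = -w + w * (z + w) / 2 := by unfold den; ring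
  have hzw : ‖z + w‖ ≤ 1 / 2 := (norm_add_le z w).trans h
  have hw : ‖w‖ ≤ 1 / 2 := by linarith [norm_nonneg z]
  calc ‖den z w - 1‖ ≤ ‖w‖ + ‖w‖ * ‖z + w‖ / 2 := by
        rw [hsplit]
        refine (norm_add_le _ _).trans ?_
        simp
    _ ≤ 1 / 2 + 1 / 2 * (1 / 2) / 2 := by gcongr
    _ = 5 / 8 := by norm_num

theorem norm_exp_sub_num_div_den_le {z w : ℂ} (h : ‖z‖ + ‖w‖ ≤ 1 / 2) :
    ‖exp (z + w) - num z w / den z w‖ ≤ 2 * (‖z‖ + ‖w‖) ^ 3 := by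
  set s := ‖z‖ + ‖w‖
  have hs0 : 0 ≤ s := by positivity
  have hu : ‖z + w‖ ≤ s := norm_add_le z w
  have hws : ‖w‖ ≤ s := by linarith [norm_nonneg z]
  have hD1 := norm_den_sub_one_le h
  have hDlow : 3 / 8 ≤ ‖den z w‖ := by
    linarith [norm_sub_norm_le (1 : ℂ) (den z w), norm_sub_rev (1 : ℂ) (den z w),
      norm_one (α := ℂ)]
  have hDup : ‖den z w‖ ≤ 13 / 8 := by
    linarith [norm_le_norm_add_norm_sub' (den z w) (1 : ℂ), norm_one (α := ℂ)]
  have hE := norm_exp_sub_taylor_two_le (hu.trans (by linarith))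
  have hnum : ‖(exp (z + w) - (1 + (z + w) + (z + w) ^ 2 / 2)) * den z w
      + w * (z + w) ^ 3 / 4‖ ≤ 3 / 4 * s ^ 3 := by
    calc _ ≤ (2 / 9 * s ^ 3) * (13 / 8) + s * s ^ 3 / 4 := by
          refine (norm_add_le _ _).trans (add_le_add ?_ ?_)
          · rw [norm_mul]
            exact mul_le_mul (hE.trans (by gcongr)) hDup (norm_nonneg _) (by positivity)
          · simp only [norm_div, norm_mul, norm_pow, Complex.norm_ofNat]
            gcongr
      _ ≤ 3 / 4 * s ^ 3 := by nlinarith [pow_nonneg hs0 3]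
  rw [exp_sub_num_div_den (norm_pos_iff.mp (by linarith)), norm_div]
  calc _ ≤ 3 / 4 * s ^ 3 / (3 / 8) := div_le_div₀ (by positivity) hnum (by norm_num) hDlow
    _ = 2 * s ^ 3 := by ring

end SIT2

/-- Second-order consistency of SI-T-2 on the linear test problem:
`e^{z+w} − R_{SI-T-2}(z,w) = O((|z|+|w|)³)` as `(z,w) → (0,0)`. -/
theorem sit2_second_order_consistent :
    ∃ C δ : ℝ, 0 < C ∧ 0 < δ ∧ ∀ z w : ℂ,
      ‖z‖ + ‖w‖ < δ →
      ‖Complex.exp (z + w)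
          - (1 + z + (z ^ 2 + z * w) / 2) / (1 - w + (z * w + w ^ 2) / 2)‖
        ≤ C * (‖z‖ + ‖w‖) ^ 3 :=
  ⟨2, 1 / 2, by norm_num, by norm_num, fun _ _ h => SIT2.norm_exp_sub_num_div_den_le h.le⟩
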